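/- arXiv:1412.4311 — 9 statements merged into one kernel-verified Lean document; each statement's English description precedes it below -/
import Mathlib

section
/- Let D = Dⁿ ∪ Dˣ be a database instance and Q a monotone Boolean query. A tuple t ∈ Dⁿ is an actual cause for Q if and only if DF^s(t) ≠ ∅, i.e., there exists an S-repair D' of D with respect to the denial constraint ¬Q such that t ∈ D \ D' and D \ D' ⊆ Dⁿ. (Proposition 1) -/
open scoped Classical

variable {α : Type*} [DecidableEq α]

/-- A monotone Boolean query on database instances (finite sets of tuples). -/
def MonotoneQuery (Q : Finset α → Prop) : Prop :=
  ∀ ⦃X Y : Finset α⦄, X ⊆ Y → Q X → Q Y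

/-- `Γ` is a contingency set for tuple `t` wrt query `Q`, instance `D`,
endogenous part `Dn`. -/
def IsContingency (D Dn : Finset α) (Q : Finset α → Prop) (t : α) (Γ : Finset α) : Prop :=
  Γ ⊆ Dn ∧ t ∉ Γ ∧ Q (D \ Γ) ∧ ¬ Q (D \ (Γ ∪ {t}))

/-- `t` is an actual cause for `Q`. -/
def IsActualCause (D Dn : Finset α) (Q : Finset α → Prop) (t : α) : Prop :=
  t ∈ Dn ∧ ∃ Γ : Finset α, IsContingency D Dn Q t Γ

/-- Minimum cardinality of a contingency set for `t`. -/
noncomputable def minContingency (D Dn : Finset α) (Q : Finset α → Prop) (t : α) : ℕ :=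
  sInf {m : ℕ | ∃ Γ : Finset α, IsContingency D Dn Q t Γ ∧ Γ.card = m}

/-- Responsibility of `t`: `1/(1+m)` with `m` the minimum size of a contingency set,
and `0` if `t` is not an actual cause. -/
noncomputable def resp (D Dn : Finset α) (Q : Finset α → Prop) (t : α) : ℚ :=
  if IsActualCause D Dn Q t then 1 / (1 + (minContingency D Dn Q t : ℚ)) else 0

/-- `t` is a most responsible actual cause. -/
def IsMostResponsibleCause (D Dn : Finset α) (Q : Finset α → Prop) (t : α) : Prop :=
  IsActualCause D Dn Q t ∧ ∀ t' : α, ¬ resp D Dn Q t < resp D Dn Q t'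

/-- `D'` is an S-repair of `D` wrt the denial constraint `¬ Q`. -/
def IsSRepair (D : Finset α) (Q : Finset α → Prop) (D' : Finset α) : Prop :=
  D' ⊆ D ∧ ¬ Q D' ∧ ∀ D'' : Finset α, D'' ⊆ D → ¬ Q D'' → D' ⊆ D'' → D'' = D'

/-- `D'` is a C-repair of `D` wrt the denial constraint `¬ Q`. -/
def IsCRepair (D : Finset α) (Q : Finset α → Prop) (D' : Finset α) : Prop :=
  D' ⊆ D ∧ ¬ Q D' ∧ ∀ D'' : Finset α, D'' ⊆ D → ¬ Q D'' → D''.card ≤ D'.card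

/-- `Γ ∈ CT(t)`: `Γ` is an S-minimal contingency set for `t`. -/
def InCT (D Dn : Finset α) (Q : Finset α → Prop) (t : α) (Γ : Finset α) : Prop :=
  IsContingency D Dn Q t Γ ∧ ∀ Γ'' : Finset α, Γ'' ⊂ Γ → Q (D \ (Γ'' ∪ {t}))

/-- `𝔖(D)`: S-minimal subsets of `D` satisfying `Q`. -/
def Sfam (D : Finset α) (Q : Finset α → Prop) : Set (Finset α) :=
  {s | s ⊆ D ∧ Q s ∧ ∀ s' : Finset α, s' ⊂ s → ¬ Q s'}

/-- Subsets of `Dn` contained in some `s' ∈ 𝔖(D)` whose remainder is exogenous. -/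
def SnPre (D Dn Dx : Finset α) (Q : Finset α → Prop) : Set (Finset α) :=
  {s | s ⊆ Dn ∧ ∃ s' ∈ Sfam D Q, s ⊆ s' ∧ s' \ s ⊆ Dx}

/-- `𝔖ⁿ(D)`: the inclusion-minimal elements of `SnPre`. -/
def SnFam (D Dn Dx : Finset α) (Q : Finset α → Prop) : Set (Finset α) :=
  {s ∈ SnPre D Dn Dx Q | ∀ s' ∈ SnPre D Dn Dx Q, s' ⊆ s → s' = s}

/-- `H` is a hitting set for `𝔖ⁿ(D)`. -/
def IsHittingSet (D Dn Dx : Finset α) (Q : Finset α → Prop) (H : Finset α) : Prop :=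
  H ⊆ Dn ∧ ∀ s ∈ SnFam D Dn Dx Q, (H ∩ s).Nonempty

/-- `H` is an S-minimal hitting set for `𝔖ⁿ(D)`. -/
def IsSMinimalHittingSet (D Dn Dx : Finset α) (Q : Finset α → Prop) (H : Finset α) : Prop :=
  IsHittingSet D Dn Dx Q H ∧ ∀ H' : Finset α, H' ⊂ H → ¬ IsHittingSet D Dn Dx Q H'

/-- `H` is a minimum-cardinality hitting set for `𝔖ⁿ(D)`. -/
def IsMinimumHittingSet (D Dn Dx : Finset α) (Q : Finset α → Prop) (H : Finset α) : Prop :=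
  IsHittingSet D Dn Dx Q H ∧ ∀ H' : Finset α, IsHittingSet D Dn Dx Q H' → H.card ≤ H'.card

/-- `Δ` is a diagnosis for the diagnosis problem associated with `Q`. -/
def IsDiagnosis (D Dn : Finset α) (Q : Finset α → Prop) (Δ : Finset α) : Prop :=
  Δ ⊆ Dn ∧ ¬ Q (D \ Δ)

/-- `Δ ∈ 𝒟(ℳ,t)`: `Δ` is an inclusion-minimal diagnosis containing `t`. -/
def IsMinimalDiagnosisWith (D Dn : Finset α) (Q : Finset α → Prop) (t : α)
    (Δ : Finset α) : Prop :=
  IsDiagnosis D Dn Q Δ ∧ t ∈ Δ ∧ ∀ Δ' : Finset α, Δ' ⊂ Δ → ¬ IsDiagnosis D Dn Q Δ'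

/-- `Δ ∈ MCD(ℳ,t)`: `Δ` is an element of `𝒟(ℳ,t)` of minimum cardinality. -/
def IsMCDWith (D Dn : Finset α) (Q : Finset α → Prop) (t : α) (Δ : Finset α) : Prop :=
  IsMinimalDiagnosisWith D Dn Q t Δ ∧
    ∀ Δ' : Finset α, IsMinimalDiagnosisWith D Dn Q t Δ' → Δ.card ≤ Δ'.card

/-! Contingency sets and S-repairs correspond to each other. Given a contingency set `Γ` for
`t`, the instance `D \ (Γ ∪ {t})` falsifies `Q`, so it extends to an S-repair `D'`; `D'` cannot
contain `t`, since it would then contain `D \ Γ` and satisfy `Q` by monotonicity, and it deletes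
only tuples of `Γ ∪ {t}`. Conversely, if an S-repair `D'` deletes `t` and only endogenous
tuples, then `(D \ D') \ {t}` is a contingency set: putting `t` back into `D'` makes `Q` true
by maximality of `D'`. -/

theorem exists_isSRepair_superset {β : Type*} {D B : Finset β} {Q : Finset β → Prop}
    (hB : B ⊆ D) (hQB : ¬ Q B) :
    ∃ D', IsSRepair D Q D' ∧ B ⊆ D' := by
  obtain ⟨D', hBD', hmax⟩ :=
    (D.powerset.filter (¬ Q ·)).exists_le_maximal (by simpa using ⟨hB, hQB⟩)
  simp only [Finset.mem_filter, Finset.mem_powerset] at hmax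
  exact ⟨D', ⟨hmax.prop.1, hmax.prop.2, fun D'' hD'' hQ'' hle =>
    hmax.eq_of_ge ⟨hD'', hQ''⟩ hle⟩, hBD'⟩

section SRepair

variable {D D' : Finset α} {Q : Finset α → Prop}

theorem IsSRepair.query_insert (hD' : IsSRepair D Q D') {x : α} (hx : x ∈ D \ D') :
    Q (insert x D') := by
  obtain ⟨hxD, hxD'⟩ := Finset.mem_sdiff.mp hx
  by_contra hQ
  have := hD'.2.2 _ (Finset.insert_subset hxD hD'.1) hQ (Finset.subset_insert x D')
  exact hxD' (this ▸ Finset.mem_insert_self x D')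

theorem IsSRepair.isContingency_erase {Dn : Finset α} {t : α} (hD' : IsSRepair D Q D')
    (ht : t ∈ D \ D') (hDn : D \ D' ⊆ Dn) :
    IsContingency D Dn Q t ((D \ D').erase t) := by
  have htD : t ∈ D := (Finset.mem_sdiff.mp ht).1
  refine ⟨(Finset.erase_subset t _).trans hDn, Finset.notMem_erase t _, ?_, ?_⟩
  · rw [Finset.sdiff_erase htD, Finset.sdiff_sdiff_eq_self hD'.1]
    exact hD'.query_insert ht
  · rw [Finset.erase_union_eq t _ ht, Finset.sdiff_sdiff_eq_self hD'.1]
    exact hD'.2.1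

theorem IsContingency.exists_isSRepair {Dn Γ : Finset α} {t : α}
    (hmono : MonotoneQuery Q) (hΓ : IsContingency D Dn Q t Γ) :
    ∃ D', IsSRepair D Q D' ∧ t ∈ D \ D' ∧ D \ D' ⊆ Γ ∪ {t} := by
  obtain ⟨-, -, hQΓ, hQΓt⟩ := hΓ
  obtain ⟨D', hD', hbase⟩ := exists_isSRepair_superset Finset.sdiff_subset hQΓt
  refine ⟨D', hD', ?_, sdiff_le_comm.1 hbase⟩
  by_contra htD'
  refine hD'.2.1 (hmono (fun x hx => ?_) hQΓ)
  obtain ⟨hxD, hxΓ⟩ := Finset.mem_sdiff.mp hx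
  by_cases hxt : x = t
  · subst hxt
    by_contra hxD'
    exact htD' (Finset.mem_sdiff.mpr ⟨hxD, hxD'⟩)
  · exact hbase (by simp [hxD, hxΓ, hxt])

end SRepair

theorem cause_iff_srepair_general (D Dn : Finset α) (Q : Finset α → Prop) (hmono : MonotoneQuery Q)
    (t : α) :
    IsActualCause D Dn Q t ↔
      ∃ D' : Finset α, IsSRepair D Q D' ∧ t ∈ D \ D' ∧ D \ D' ⊆ Dn := by
  constructor
  · rintro ⟨htDn, Γ, hΓ⟩
    obtain ⟨D', hD', ht, hcompl⟩ := hΓ.exists_isSRepair hmono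
    exact ⟨D', hD', ht,
      hcompl.trans (Finset.union_subset hΓ.1 (Finset.singleton_subset_iff.2 htDn))⟩
  · rintro ⟨D', hD', ht, hDn⟩
    exact ⟨hDn ht, _, hD'.isContingency_erase ht hDn⟩

/-- Proposition 1: `t ∈ Dⁿ` is an actual cause for `Q` iff `DF^s(t) ≠ ∅`. -/
theorem cause_iff_srepair (D Dn Dx : Finset α) (Q : Finset α → Prop)
    (hpart : D = Dn ∪ Dx) (hdisj : Disjoint Dn Dx) (hmono : MonotoneQuery Q)
    (t : α) (ht : t ∈ Dn) :
    IsActualCause D Dn Q t ↔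
      ∃ D' : Finset α, IsSRepair D Q D' ∧ t ∈ D \ D' ∧ D \ D' ⊆ Dn :=
  cause_iff_srepair_general D Dn Q hmono t
end

section
/- Let D be a database instance in which all tuples are endogenous (Dⁿ = D, Dˣ = ∅) and Q a monotone Boolean query. A tuple t ∈ D is a most responsible actual cause for Q if and only if DF^c(t) ≠ ∅, i.e., there exists a C-repair D' of D with respect to the denial constraint ¬Q such that t ∈ D \ D'. (Corollary 1, stated for all-endogenous instances) -/
/-! With every tuple endogenous, deleting a contingency set `Γ` for `u` together with `u` leaves a
subset of `D` falsifying `Q`, so `|Γ| + 1 ≥ |D| - N`, where `N` is the size of the C-repairs.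
Conversely, for a C-repair `D'` and `u ∈ D \ D'`, the set `(D \ D') \ {u}` is a contingency set
for `u` of size `|D| - N - 1`. So the least possible minimal contingency size `|D| - N - 1` is
attained exactly by the tuples deleted by some C-repair, and a minimum contingency set `Γ` of such
a `t` yields the C-repair `D \ (Γ ∪ {t})`. -/

open scoped Classical

variable {α : Type*} [DecidableEq α]

lemma card_le_card_sdiff_union_singleton (D Γ : Finset α) (u : α) :
    D.card ≤ (D \ (Γ ∪ {u})).card + Γ.card + 1 := by
  have := Finset.le_card_sdiff (Γ ∪ {u}) D
  have := Finset.card_union_le Γ {u}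
  rw [Finset.card_singleton] at this
  omega

section Responsibility

variable {D Dn : Finset α} {Q : Finset α → Prop} {u t : α}

lemma minContingency_le {Γ : Finset α} (hΓ : IsContingency D Dn Q u Γ) :
    minContingency D Dn Q u ≤ Γ.card :=
  Nat.sInf_le (Set.mem_ofPred.mpr ⟨Γ, hΓ, rfl⟩)

lemma IsActualCause.exists_card_eq_minContingency (h : IsActualCause D Dn Q u) :
    ∃ Γ, IsContingency D Dn Q u Γ ∧ Γ.card = minContingency D Dn Q u := by
  obtain ⟨-, Γ, hΓ⟩ := h
  exact Nat.sInf_mem (s := {m | ∃ Γ, IsContingency D Dn Q u Γ ∧ Γ.card = m}) ⟨_, Γ, hΓ, rfl⟩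

lemma isMostResponsibleCause_iff :
    IsMostResponsibleCause D Dn Q t ↔ IsActualCause D Dn Q t ∧
      ∀ t', IsActualCause D Dn Q t' → minContingency D Dn Q t ≤ minContingency D Dn Q t' := by
  refine and_congr_right fun ht => forall_congr' fun t' => ?_
  rw [resp, resp, if_pos ht, not_lt]
  split_ifs with ht'
  · simp only [ht', true_implies]
    rw [one_div_le_one_div (by positivity) (by positivity)]
    simp
  · simp only [ht', false_implies, iff_true]
    positivity

end Responsibility

section CRepair

variable {D D' Dn : Finset α} {Q : Finset α → Prop} {u : α}

omit [DecidableEq α] in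
lemma exists_isCRepair (hQ : ¬ Q ∅) : ∃ D', IsCRepair D Q D' := by
  have hne : (D.powerset.filter fun X => ¬ Q X).Nonempty :=
    ⟨∅, Finset.mem_filter.mpr ⟨Finset.empty_mem_powerset D, hQ⟩⟩
  obtain ⟨D', hD', hmax⟩ := Finset.exists_max_image _ Finset.card hne
  rw [Finset.mem_filter, Finset.mem_powerset] at hD'
  exact ⟨D', hD'.1, hD'.2, fun X hX hQX =>
    hmax X (Finset.mem_filter.mpr ⟨Finset.mem_powerset.mpr hX, hQX⟩)⟩

omit [DecidableEq α] in
lemma IsCRepair.of_card_le {D₀ : Finset α} (hD₀ : IsCRepair D Q D₀) (hD' : D' ⊆ D)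
    (hQ : ¬ Q D') (hcard : D₀.card ≤ D'.card) : IsCRepair D Q D' :=
  ⟨hD', hQ, fun X hX hQX => (hD₀.2.2 X hX hQX).trans hcard⟩

lemma IsCRepair.card_le_add_minContingency (hC : IsCRepair D Q D')
    (hu : IsActualCause D Dn Q u) : D.card ≤ D'.card + minContingency D Dn Q u + 1 := by
  obtain ⟨Γ, hΓ, hcard⟩ := hu.exists_card_eq_minContingency
  have := hC.2.2 _ Finset.sdiff_subset hΓ.2.2.2
  have := card_le_card_sdiff_union_singleton D Γ u
  omega

/-- Deleting this contingency set leaves `insert u D'`, which satisfies `Q` because it is larger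
than the C-repair `D'`. -/
lemma IsCRepair.isContingency (hC : IsCRepair D Q D') (hu : u ∈ D \ D') (hDn : D \ D' ⊆ Dn) :
    IsContingency D Dn Q u ((D \ D') \ {u}) := by
  obtain ⟨huD, huD'⟩ := Finset.mem_sdiff.mp hu
  refine ⟨Finset.sdiff_subset.trans hDn, by simp, ?_, ?_⟩
  · have hrest : D \ ((D \ D') \ {u}) = insert u D' := by
      ext x
      have := @hC.1 x
      simp only [Finset.mem_sdiff, Finset.mem_singleton, Finset.mem_insert]
      grind
    rw [hrest]
    by_contra hQ
    have := hC.2.2 _ (Finset.insert_subset huD hC.1) hQ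
    rw [Finset.card_insert_of_notMem huD'] at this
    omega
  · rw [Finset.sdiff_union_of_subset (Finset.singleton_subset_iff.mpr hu),
      Finset.sdiff_sdiff_eq_self hC.1]
    exact hC.2.1

lemma IsCRepair.minContingency_add_card_lt (hC : IsCRepair D Q D') (hu : u ∈ D \ D')
    (hDn : D \ D' ⊆ Dn) : minContingency D Dn Q u + D'.card < D.card := by
  have hmin := minContingency_le (hC.isContingency hu hDn)
  rw [Finset.sdiff_singleton_eq_erase] at hmin
  have := Finset.card_erase_add_one hu
  have := Finset.card_sdiff_add_card_eq_card hC.1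
  omega

lemma IsCRepair.isActualCause (hC : IsCRepair D Q D') (hu : u ∈ D \ D') :
    IsActualCause D D Q u :=
  ⟨(Finset.mem_sdiff.mp hu).1, _, hC.isContingency hu Finset.sdiff_subset⟩

end CRepair

theorem mrc_iff_crepair_general (D : Finset α) (Q : Finset α → Prop) (hmono : MonotoneQuery Q)
    (t : α) :
    IsMostResponsibleCause D D Q t ↔
      ∃ D' : Finset α, IsCRepair D Q D' ∧ t ∈ D \ D' ∧ D \ D' ⊆ D := by
  rw [isMostResponsibleCause_iff]
  constructor
  · rintro ⟨ht, hmin⟩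
    obtain ⟨htD, Γ₀, hΓ₀⟩ := ht
    have hQD : Q D := hmono Finset.sdiff_subset hΓ₀.2.2.1
    have hQempty : ¬ Q ∅ := fun h => hΓ₀.2.2.2 (hmono (Finset.empty_subset _) h)
    obtain ⟨D₀, hD₀⟩ := exists_isCRepair (D := D) hQempty
    obtain ⟨s, hs⟩ : (D \ D₀).Nonempty :=
      Finset.sdiff_nonempty.mpr fun h => hD₀.2.1 (hmono h hQD)
    obtain ⟨Γ, hΓ, hcard⟩ := IsActualCause.exists_card_eq_minContingency ⟨htD, Γ₀, hΓ₀⟩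
    have hts := hmin s (hD₀.isActualCause hs)
    have hs_lt := hD₀.minContingency_add_card_lt hs Finset.sdiff_subset
    have := card_le_card_sdiff_union_singleton D Γ t
    refine ⟨D \ (Γ ∪ {t}), hD₀.of_card_le Finset.sdiff_subset hΓ.2.2.2 (by omega), ?_,
      Finset.sdiff_subset⟩
    simp [htD]
  · rintro ⟨D', hC, ht, -⟩
    refine ⟨hC.isActualCause ht, fun t' ht' => ?_⟩
    have := hC.minContingency_add_card_lt ht Finset.sdiff_subset
    have := hC.card_le_add_minContingency ht'
    omega

/-- Corollary 1 (all tuples endogenous): `t` is a most responsible actual cause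
for `Q` iff `DF^c(t) ≠ ∅`. -/
theorem mrc_iff_crepair (D : Finset α) (Q : Finset α → Prop) (hmono : MonotoneQuery Q)
    (t : α) (ht : t ∈ D) :
    IsMostResponsibleCause D D Q t ↔
      ∃ D' : Finset α, IsCRepair D Q D' ∧ t ∈ D \ D' ∧ D \ D' ⊆ D :=
  mrc_iff_crepair_general D Q hmono t
end

section
/- Let D be a database instance in which all tuples are endogenous and Q a monotone Boolean query (the disjunction of the violation views of a set of denial constraints). For every proper subset D' ⊊ D: D' is an S-repair of D with respect to ¬Q if and only if for every t ∈ D \ D', t is an actual cause for Q and D \ (D' ∪ {t}) ∈ CT(t). (Proposition 3) -/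
open scoped Classical

variable {α : Type*} [DecidableEq α]

/-! For a monotone query, maximality of `D'` among subsets of `D` falsifying `Q` is local: it
amounts to `Q (D' ∪ {t})` for every `t ∈ D \ D'`. Removing `Γ = D \ (D' ∪ {t})` from `D` leaves
`D' ∪ {t}` and removing `Γ ∪ {t}` leaves `D'`, so `Γ` is a contingency set for `t` exactly when
`Q (D' ∪ {t})` and `¬ Q D'`. A proper subset of `Γ` misses some `u ∈ D \ D'`, so its complement
contains `D' ∪ {u}`; this gives the S-minimality of `Γ`. -/

section

variable {D D' : Finset α} {Q : Finset α → Prop} {t : α}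

theorem isSRepair_iff_of_monotone (hmono : MonotoneQuery Q) :
    IsSRepair D Q D' ↔ D' ⊆ D ∧ ¬ Q D' ∧ ∀ t ∈ D \ D', Q (D' ∪ {t}) := by
  refine and_congr_right fun hD' => and_congr_right fun _ => ⟨?_, ?_⟩
  · intro hmax t ht
    obtain ⟨htD, htD'⟩ := Finset.mem_sdiff.1 ht
    by_contra hQ
    have hext := hmax (D' ∪ {t}) (Finset.union_subset hD' (Finset.singleton_subset_iff.2 htD))
      hQ Finset.subset_union_left
    exact htD' (hext ▸ Finset.mem_union_right _ (Finset.mem_singleton_self t))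
  · intro hext D'' hD'' hQ hD'D''
    by_contra hne
    obtain ⟨t, htD'', htD'⟩ := Finset.exists_of_ssubset (hD'D''.ssubset_of_ne (Ne.symm hne))
    exact hQ (hmono (Finset.union_subset hD'D'' (Finset.singleton_subset_iff.2 htD''))
      (hext t (Finset.mem_sdiff.2 ⟨hD'' htD'', htD'⟩)))

theorem sdiff_sdiff_union_singleton (hD' : D' ⊆ D) (ht : t ∈ D \ D') :
    D \ (D \ (D' ∪ {t})) = D' ∪ {t} :=
  Finset.sdiff_sdiff_eq_self
    (Finset.union_subset hD' (Finset.singleton_subset_iff.2 (Finset.mem_sdiff.1 ht).1))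

theorem sdiff_sdiff_union_singleton_union_singleton (hD' : D' ⊆ D) (ht : t ∈ D \ D') :
    D \ (D \ (D' ∪ {t}) ∪ {t}) = D' := by
  rw [← Finset.sup_eq_union, ← sdiff_sdiff_left, sdiff_sdiff_union_singleton hD' ht,
    Finset.union_sdiff_cancel_right (Finset.disjoint_singleton_right.2 (Finset.mem_sdiff.1 ht).2)]

theorem isContingency_sdiff_union_singleton_iff (hD' : D' ⊆ D) (ht : t ∈ D \ D') :
    IsContingency D D Q t (D \ (D' ∪ {t})) ↔ Q (D' ∪ {t}) ∧ ¬ Q D' := by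
  simp only [IsContingency, sdiff_sdiff_union_singleton hD' ht,
    sdiff_sdiff_union_singleton_union_singleton hD' ht, Finset.sdiff_subset, true_and,
    Finset.mem_sdiff, Finset.mem_union, Finset.mem_singleton, or_true, not_true_eq_false,
    and_false, not_false_eq_true]

theorem query_sdiff_union_singleton_of_ssubset (hmono : MonotoneQuery Q) (hD' : D' ⊆ D)
    (ht : t ∉ D') (hext : ∀ u ∈ D \ D', Q (D' ∪ {u})) {Γ : Finset α}
    (hΓ : Γ ⊂ D \ (D' ∪ {t})) : Q (D \ (Γ ∪ {t})) := by
  obtain ⟨u, hu, huΓ⟩ := Finset.exists_of_ssubset hΓ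
  have hΓD' : Disjoint Γ (D' ∪ {t}) :=
    Finset.disjoint_of_subset_left hΓ.subset Finset.sdiff_disjoint
  have hsub : D' ∪ {u} ⊆ D \ (Γ ∪ {t}) := by
    intro x hx
    have hxD := @hD' x
    have hxΓ : x ∈ Γ → x ∉ D' ∪ {t} := fun h => Finset.disjoint_left.1 hΓD' h
    simp only [Finset.mem_sdiff, Finset.mem_union, Finset.mem_singleton] at hu hx hxΓ ⊢
    grind
  exact hmono hsub (hext u (Finset.mem_sdiff.2 ⟨(Finset.mem_sdiff.1 hu).1,
    fun h => (Finset.mem_sdiff.1 hu).2 (Finset.mem_union_left _ h)⟩))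

end

/-- Proposition 3: S-repairs from causes and S-minimal contingency sets. -/
theorem srepair_iff_causes (D : Finset α) (Q : Finset α → Prop) (hmono : MonotoneQuery Q)
    (D' : Finset α) (hss : D' ⊂ D) :
    IsSRepair D Q D' ↔
      ∀ t ∈ D \ D', IsActualCause D D Q t ∧ InCT D D Q t (D \ (D' ∪ {t})) := by
  have hD' : D' ⊆ D := hss.subset
  rw [isSRepair_iff_of_monotone hmono]
  constructor
  · rintro ⟨-, hQD', hext⟩ t ht
    have hcont := (isContingency_sdiff_union_singleton_iff hD' ht).2 ⟨hext t ht, hQD'⟩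
    obtain ⟨htD, htD'⟩ := Finset.mem_sdiff.1 ht
    exact ⟨⟨htD, _, hcont⟩, hcont,
      fun _ hΓ => query_sdiff_union_singleton_of_ssubset hmono hD' htD' hext hΓ⟩
  · intro h
    obtain ⟨t₀, ht₀D, ht₀D'⟩ := Finset.exists_of_ssubset hss
    have ht₀ : t₀ ∈ D \ D' := Finset.mem_sdiff.2 ⟨ht₀D, ht₀D'⟩
    refine ⟨hD', ((isContingency_sdiff_union_singleton_iff hD' ht₀).1 (h t₀ ht₀).2.1).2,
      fun t ht => ((isContingency_sdiff_union_singleton_iff hD' ht).1 (h t ht).2.1).1⟩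
end

section
/- Let D = Dⁿ ∪ Dˣ be a database instance and Q a monotone Boolean query. A tuple t ∈ Dⁿ is an actual cause for Q if and only if there exists s ∈ 𝔖ⁿ(D) with t ∈ s. (Proposition 5(a)) -/
open scoped Classical

variable {α : Type*} [DecidableEq α]

/-! Removing a set `Γ ⊆ Dⁿ` of endogenous tuples keeps `Q` true exactly when `Γ` misses some
member of `𝔖ⁿ(D)`: the endogenous part of a minimal witness inside `D \ Γ` lies in the upward
closure of `𝔖ⁿ(D)`, and conversely a member `s` of `𝔖ⁿ(D)` completes to a witness by exogenous
tuples, which no `Γ ⊆ Dⁿ` removes. Hence a contingency set `Γ` for `t` misses some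
`s ∈ 𝔖ⁿ(D)` while `Γ ∪ {t}` misses none, so `t ∈ s`; conversely for `t ∈ s ∈ 𝔖ⁿ(D)` the set
`Γ = Dⁿ \ s` is a contingency set, because `𝔖ⁿ(D)` is an antichain and `s` is the only member
that `Γ` misses. -/

section Causality

open Finset

variable {D Dn Dx Γ s X : Finset α} {Q : Finset α → Prop} {t : α}

omit [DecidableEq α] in
theorem mem_Sfam_iff : s ∈ Sfam D Q ↔ s ⊆ D ∧ Minimal Q s := by
  rw [minimal_iff_forall_lt]
  rfl

omit [DecidableEq α] in
theorem exists_mem_Sfam_subset (hXD : X ⊆ D) (hQ : Q X) : ∃ s ∈ Sfam D Q, s ⊆ X := by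
  obtain ⟨s, hsX, hs⟩ := exists_minimal_le_of_wellFoundedLT Q X hQ
  exact ⟨s, mem_Sfam_iff.2 ⟨hsX.trans hXD, hs⟩, hsX⟩

theorem mem_SnFam_iff : s ∈ SnFam D Dn Dx Q ↔ Minimal (· ∈ SnPre D Dn Dx Q) s := by
  rw [minimal_iff]
  exact and_congr_right' (forall₂_congr fun _ _ => forall_congr' fun _ => eq_comm)

theorem exists_mem_SnFam_subset (hs : s ∈ SnPre D Dn Dx Q) :
    ∃ s₀ ∈ SnFam D Dn Dx Q, s₀ ⊆ s := by
  obtain ⟨s₀, hs₀s, hs₀⟩ := exists_minimal_le_of_wellFoundedLT (· ∈ SnPre D Dn Dx Q) s hs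
  exact ⟨s₀, mem_SnFam_iff.2 hs₀, hs₀s⟩

theorem inter_mem_SnPre (hD : D ⊆ Dn ∪ Dx) (hs : s ∈ Sfam D Q) :
    s ∩ Dn ∈ SnPre D Dn Dx Q := by
  refine ⟨inter_subset_right, s, hs, inter_subset_left, fun x hx => ?_⟩
  rw [sdiff_inter_self_left, mem_sdiff] at hx
  exact (mem_union.1 (hD (hs.1 hx.1))).resolve_left hx.2

theorem exists_mem_SnFam_disjoint_of_query_sdiff (hD : D ⊆ Dn ∪ Dx) (hQ : Q (D \ Γ)) :
    ∃ s ∈ SnFam D Dn Dx Q, Disjoint s Γ := by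
  obtain ⟨s, hs, hsΓ⟩ := exists_mem_Sfam_subset sdiff_subset hQ
  obtain ⟨s₀, hs₀, hs₀s⟩ := exists_mem_SnFam_subset (inter_mem_SnPre hD hs)
  exact ⟨s₀, hs₀, disjoint_of_subset_left ((hs₀s.trans inter_subset_left).trans hsΓ)
    sdiff_disjoint⟩

theorem query_sdiff_of_mem_SnPre (hdisj : Disjoint Dn Dx) (hmono : MonotoneQuery Q)
    (hs : s ∈ SnPre D Dn Dx Q) (hsΓ : Disjoint s Γ) (hΓ : Γ ⊆ Dn) : Q (D \ Γ) := by
  obtain ⟨-, s', hs', hss', hs'x⟩ := hs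
  refine hmono (fun x hx => mem_sdiff.2 ⟨hs'.1 hx, fun hxΓ => ?_⟩) hs'.2.1
  by_cases hxs : x ∈ s
  · exact disjoint_left.1 hsΓ hxs hxΓ
  · exact disjoint_left.1 hdisj (hΓ hxΓ) (hs'x (mem_sdiff.2 ⟨hx, hxs⟩))

theorem exists_mem_SnFam_of_isContingency (hD : D ⊆ Dn ∪ Dx) (hdisj : Disjoint Dn Dx)
    (hmono : MonotoneQuery Q) (ht : t ∈ Dn) (hΓ : IsContingency D Dn Q t Γ) :
    ∃ s ∈ SnFam D Dn Dx Q, t ∈ s := by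
  obtain ⟨hΓDn, -, hQ, hnQ⟩ := hΓ
  obtain ⟨s, hs, hsΓ⟩ := exists_mem_SnFam_disjoint_of_query_sdiff hD hQ
  refine ⟨s, hs, by_contra fun hts => hnQ ?_⟩
  exact query_sdiff_of_mem_SnPre hdisj hmono hs.1
    (disjoint_union_right.2 ⟨hsΓ, disjoint_singleton_right.2 hts⟩)
    (union_subset hΓDn (singleton_subset_iff.2 ht))

theorem isContingency_sdiff_of_mem_SnFam (hD : D ⊆ Dn ∪ Dx) (hdisj : Disjoint Dn Dx)
    (hmono : MonotoneQuery Q) (hs : s ∈ SnFam D Dn Dx Q) (hts : t ∈ s) :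
    IsContingency D Dn Q t (Dn \ s) := by
  refine ⟨sdiff_subset, fun h => (mem_sdiff.1 h).2 hts,
    query_sdiff_of_mem_SnPre hdisj hmono hs.1 disjoint_sdiff sdiff_subset, fun hQ => ?_⟩
  obtain ⟨s₀, hs₀, hs₀Γ⟩ := exists_mem_SnFam_disjoint_of_query_sdiff hD hQ
  have hs₀s : s₀ ⊆ s := fun x hx => by
    by_contra hxs
    exact disjoint_left.1 hs₀Γ hx (mem_union_left _ (mem_sdiff.2 ⟨hs₀.1.1 hx, hxs⟩))
  have hs₀_eq : s₀ = s := (mem_SnFam_iff.1 hs).eq_of_le hs₀.1 hs₀s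
  subst hs₀_eq
  exact disjoint_left.1 hs₀Γ hts (mem_union_right _ (mem_singleton_self t))

end Causality

theorem cause_iff_mem_SnFam_general (D Dn Dx : Finset α) (Q : Finset α → Prop)
    (hpart : D = Dn ∪ Dx) (hdisj : Disjoint Dn Dx) (hmono : MonotoneQuery Q)
    (t : α) :
    IsActualCause D Dn Q t ↔ ∃ s ∈ SnFam D Dn Dx Q, t ∈ s := by
  constructor
  · rintro ⟨ht, Γ, hΓ⟩
    exact exists_mem_SnFam_of_isContingency hpart.le hdisj hmono ht hΓ
  · rintro ⟨s, hs, hts⟩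
    exact ⟨hs.1.1 hts, Dn \ s, isContingency_sdiff_of_mem_SnFam hpart.le hdisj hmono hs hts⟩

/-- Proposition 5(a): `t` is an actual cause for `Q` iff `t` belongs to some
member of `𝔖ⁿ(D)`. -/
theorem cause_iff_mem_SnFam (D Dn Dx : Finset α) (Q : Finset α → Prop)
    (hpart : D = Dn ∪ Dx) (hdisj : Disjoint Dn Dx) (hmono : MonotoneQuery Q)
    (t : α) (ht : t ∈ Dn) :
    IsActualCause D Dn Q t ↔ ∃ s ∈ SnFam D Dn Dx Q, t ∈ s :=
  cause_iff_mem_SnFam_general D Dn Dx Q hpart hdisj hmono t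
end

section
/- Let D = Dⁿ ∪ Dˣ be a database instance, Q a monotone Boolean query, t ∈ Dⁿ, and Γ ⊆ Dⁿ with t ∉ Γ. Then t is an actual cause for Q with S-minimal contingency set Γ (i.e., Γ ∈ CT(t)) if and only if Γ ∪ {t} is an S-minimal hitting set for 𝔖ⁿ(D). (Proposition 6(a)) -/
open scoped Classical

variable {α : Type*} [DecidableEq α]

/-!
For endogenous `H`, `H` hits every member of `𝔖ⁿ(D)` exactly when `Q (D \ H)` fails: a witness
of `Q` inside `D \ H` shrinks to a member of `𝔖(D)`, whose endogenous part contains a member of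
`𝔖ⁿ(D)` missed by `H`; conversely, a member of `𝔖ⁿ(D)` missed by `H` is completed by exogenous
tuples to a witness of `Q` inside `D \ H`. Hence the S-minimal hitting sets are the S-minimal
endogenous sets whose removal falsifies `Q`, and for `Γ ∪ {t}` monotonicity splits this
minimality into `Q (D \ Γ)` and the minimality condition defining `CT(t)`.
-/

section HittingSets

variable {D Dn Dx : Finset α} {Q : Finset α → Prop}

omit [DecidableEq α] in
lemma exists_mem_sfam_subset {X : Finset α} (hXD : X ⊆ D) (hQ : Q X) :
    ∃ s ∈ Sfam D Q, s ⊆ X := by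
  obtain ⟨s, hsX, hs⟩ := exists_minimal_le_of_wellFoundedLT Q X hQ
  exact ⟨s, ⟨hsX.trans hXD, hs.prop, fun _ h => hs.not_prop_of_lt h⟩, hsX⟩

lemma exists_mem_snFam_subset {s : Finset α} (hs : s ∈ SnPre D Dn Dx Q) :
    ∃ m ∈ SnFam D Dn Dx Q, m ⊆ s := by
  obtain ⟨m, hms, hm⟩ := exists_minimal_le_of_wellFoundedLT (· ∈ SnPre D Dn Dx Q) s hs
  exact ⟨m, ⟨hm.prop, fun _ h hle => hm.eq_of_le h hle⟩, hms⟩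

lemma inter_mem_snPre (hpart : D = Dn ∪ Dx) {s : Finset α} (hs : s ∈ Sfam D Q) :
    s ∩ Dn ∈ SnPre D Dn Dx Q := by
  refine ⟨Finset.inter_subset_right, s, hs, Finset.inter_subset_left, fun x hx => ?_⟩
  obtain ⟨hxs, hxDn⟩ := Finset.mem_sdiff.1 hx
  have hxD : x ∈ Dn ∪ Dx := hpart ▸ hs.1 hxs
  exact (Finset.mem_union.1 hxD).resolve_left fun h => hxDn (Finset.mem_inter.2 ⟨hxs, h⟩)

lemma not_query_sdiff_of_isHittingSet (hpart : D = Dn ∪ Dx) {H : Finset α}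
    (hH : IsHittingSet D Dn Dx Q H) : ¬ Q (D \ H) := by
  intro hQ
  obtain ⟨s, hs, hsH⟩ := exists_mem_sfam_subset Finset.sdiff_subset hQ
  obtain ⟨m, hm, hms⟩ := exists_mem_snFam_subset (inter_mem_snPre hpart hs)
  obtain ⟨x, hx⟩ := hH.2 m hm
  obtain ⟨hxH, hxm⟩ := Finset.mem_inter.1 hx
  exact (Finset.mem_sdiff.1 (hsH (Finset.inter_subset_left (hms hxm)))).2 hxH

lemma query_sdiff_of_disjoint_of_mem_snPre (hdisj : Disjoint Dn Dx) (hmono : MonotoneQuery Q)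
    {H s : Finset α} (hH : H ⊆ Dn) (hs : s ∈ SnPre D Dn Dx Q) (hHs : Disjoint H s) :
    Q (D \ H) := by
  obtain ⟨-, s', hs', -, hs'Dx⟩ := hs
  refine hmono (fun x hx => Finset.mem_sdiff.2 ⟨hs'.1 hx, fun hxH => ?_⟩) hs'.2.1
  have hxs : x ∉ s := Finset.disjoint_left.1 hHs hxH
  exact Finset.disjoint_left.1 hdisj (hH hxH) (hs'Dx (Finset.mem_sdiff.2 ⟨hx, hxs⟩))

theorem isHittingSet_iff (hpart : D = Dn ∪ Dx) (hdisj : Disjoint Dn Dx)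
    (hmono : MonotoneQuery Q) {H : Finset α} :
    IsHittingSet D Dn Dx Q H ↔ H ⊆ Dn ∧ ¬ Q (D \ H) := by
  refine ⟨fun h => ⟨h.1, not_query_sdiff_of_isHittingSet hpart h⟩, fun ⟨hH, hQ⟩ => ⟨hH, ?_⟩⟩
  intro s hs
  by_contra hHs
  rw [Finset.not_nonempty_iff_eq_empty, ← Finset.disjoint_iff_inter_eq_empty] at hHs
  exact hQ (query_sdiff_of_disjoint_of_mem_snPre hdisj hmono hH hs.1 hHs)

theorem isSMinimalHittingSet_iff (hpart : D = Dn ∪ Dx) (hdisj : Disjoint Dn Dx)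
    (hmono : MonotoneQuery Q) {H : Finset α} :
    IsSMinimalHittingSet D Dn Dx Q H ↔
      H ⊆ Dn ∧ ¬ Q (D \ H) ∧ ∀ H' ⊂ H, Q (D \ H') := by
  simp only [IsSMinimalHittingSet, isHittingSet_iff hpart hdisj hmono, not_and, not_not]
  refine ⟨fun ⟨⟨hH, hQ⟩, hmin⟩ => ⟨hH, hQ, fun H' h => hmin H' h (h.subset.trans hH)⟩,
    fun ⟨hH, hQ, hmin⟩ => ⟨⟨hH, hQ⟩, fun H' h _ => hmin H' h⟩⟩

end HittingSets

theorem Finset.forall_ssubset_union_singleton_iff {P : Finset α → Prop}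
    (hP : ∀ ⦃s u : Finset α⦄, s ⊆ u → P u → P s) {Γ : Finset α} {t : α} (ht : t ∉ Γ) :
    (∀ H ⊂ Γ ∪ {t}, P H) ↔ P Γ ∧ ∀ Γ' ⊂ Γ, P (Γ' ∪ {t}) := by
  simp only [Finset.union_comm _ {t}, ← Finset.insert_eq]
  refine ⟨fun h => ⟨h Γ (Finset.ssubset_insert ht), fun Γ' hΓ' => h _ ?_⟩, fun ⟨hΓ, h⟩ H hH => ?_⟩
  · grind
  · by_cases htH : t ∈ H
    · rw [← Finset.insert_erase htH]
      exact h _ (by grind)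
    · exact hP (by grind) hΓ

theorem ct_iff_sminimal_hs_general (D Dn Dx : Finset α) (Q : Finset α → Prop)
    (hpart : D = Dn ∪ Dx) (hdisj : Disjoint Dn Dx) (hmono : MonotoneQuery Q)
    (t : α) (ht : t ∈ Dn) (Γ : Finset α) (htΓ : t ∉ Γ) :
    InCT D Dn Q t Γ ↔ IsSMinimalHittingSet D Dn Dx Q (Γ ∪ {t}) := by
  have hanti : ∀ ⦃s u : Finset α⦄, s ⊆ u → Q (D \ u) → Q (D \ s) := fun _ _ h =>
    hmono (Finset.sdiff_subset_sdiff subset_rfl h)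
  rw [isSMinimalHittingSet_iff hpart hdisj hmono,
    Finset.forall_ssubset_union_singleton_iff hanti htΓ, Finset.union_subset_iff,
    Finset.singleton_subset_iff]
  simp only [InCT, IsContingency, ht, htΓ]
  tauto

/-- Proposition 6(a): `Γ ∈ CT(t)` iff `Γ ∪ {t}` is an S-minimal hitting set
for `𝔖ⁿ(D)`. -/
theorem ct_iff_sminimal_hs (D Dn Dx : Finset α) (Q : Finset α → Prop)
    (hpart : D = Dn ∪ Dx) (hdisj : Disjoint Dn Dx) (hmono : MonotoneQuery Q)
    (t : α) (ht : t ∈ Dn) (Γ : Finset α) (hΓ : Γ ⊆ Dn) (htΓ : t ∉ Γ) :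
    InCT D Dn Q t Γ ↔ IsSMinimalHittingSet D Dn Dx Q (Γ ∪ {t}) :=
  ct_iff_sminimal_hs_general D Dn Dx Q hpart hdisj hmono t ht Γ htΓ
end

section
/- Let D be a database instance in which all tuples are endogenous and Q a monotone Boolean query. For every tuple t that is a most responsible actual cause for Q, there exists a C-repair D' of D with respect to ¬Q such that t ∉ D'. (Corollary 3(b)) -/
open scoped Classical

variable {α : Type*} [DecidableEq α]

/-!
Take a minimum contingency set `Γ` of `t`, of size `m`. Then `E = D \ (Γ ∪ {t})` falsifies `Q`,
misses `t` and has `|D| - m - 1` elements. Let `M` be any C-repair; since `Q D` holds, some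
`t' ∈ D \ M` exists, and `(D \ M) \ {t'}` is a contingency set for `t'` by the maximality of `M`.
As `t` is most responsible, `m ≤ minContingency t' ≤ |D| - |M| - 1`, so `|M| ≤ |E|` and `E` is
itself a C-repair.
-/

section

variable {D Dn Γ M : Finset α} {Q : Finset α → Prop} {t t' : α}

theorem minContingency_le_card (h : IsContingency D Dn Q t Γ) : minContingency D Dn Q t ≤ Γ.card :=
  Nat.sInf_le ⟨Γ, h, rfl⟩

theorem IsActualCause.exists_contingency_card_eq (h : IsActualCause D Dn Q t) :
    ∃ Γ, IsContingency D Dn Q t Γ ∧ Γ.card = minContingency D Dn Q t := by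
  obtain ⟨-, Γ, hΓ⟩ := h
  have hne : {m | ∃ Γ, IsContingency D Dn Q t Γ ∧ Γ.card = m}.Nonempty := ⟨_, Γ, hΓ, rfl⟩
  exact Nat.sInf_mem hne

theorem resp_of_isActualCause (h : IsActualCause D Dn Q t) :
    resp D Dn Q t = 1 / (1 + (minContingency D Dn Q t : ℚ)) :=
  if_pos h

theorem minContingency_le_of_resp_le (ht : IsActualCause D Dn Q t)
    (ht' : IsActualCause D Dn Q t') (h : resp D Dn Q t' ≤ resp D Dn Q t) :
    minContingency D Dn Q t ≤ minContingency D Dn Q t' := by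
  rw [resp_of_isActualCause ht, resp_of_isActualCause ht', one_div_le_one_div (by positivity)
    (by positivity)] at h
  exact_mod_cast le_of_add_le_add_left h

theorem IsContingency.card_sdiff_union_singleton_add (h : IsContingency D Dn Q t Γ) (hDn : Dn ⊆ D)
    (ht : t ∈ D) : (D \ (Γ ∪ {t})).card + Γ.card + 1 = D.card := by
  obtain ⟨hΓ, htΓ, -, -⟩ := h
  have hsub : Γ ∪ {t} ⊆ D := Finset.union_subset (hΓ.trans hDn) (Finset.singleton_subset_iff.2 ht)
  have hdisj : Disjoint Γ {t} := Finset.disjoint_singleton_right.2 htΓ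
  have := Finset.card_sdiff_add_card_eq_card hsub
  rw [Finset.card_union_of_disjoint hdisj, Finset.card_singleton] at this
  omega

omit [DecidableEq α] in
theorem exists_isCRepair_s10 {E : Finset α} (hE : E ⊆ D) (hQE : ¬ Q E) : ∃ M, IsCRepair D Q M := by
  have hne : (D.powerset.filter (¬ Q ·)).Nonempty := ⟨E, by simpa [hE] using hQE⟩
  obtain ⟨M, hM, hmax⟩ := Finset.exists_max_image _ Finset.card hne
  simp only [Finset.mem_filter, Finset.mem_powerset] at hM
  exact ⟨M, hM.1, hM.2, fun D'' hD'' hQ => hmax D'' (by simpa [hD''] using hQ)⟩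

omit [DecidableEq α] in
theorem IsCRepair.of_card_le_s10 {E : Finset α} (hM : IsCRepair D Q M) (hE : E ⊆ D) (hQE : ¬ Q E)
    (hcard : M.card ≤ E.card) : IsCRepair D Q E :=
  ⟨hE, hQE, fun D'' hD'' hQ => (hM.2.2 D'' hD'' hQ).trans hcard⟩

theorem IsCRepair.query_insert (hM : IsCRepair D Q M) (ht' : t' ∈ D \ M) : Q (insert t' M) := by
  rw [Finset.mem_sdiff] at ht'
  by_contra hQ
  have := hM.2.2 _ (Finset.insert_subset ht'.1 hM.1) hQ
  rw [Finset.card_insert_of_notMem ht'.2] at this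
  omega

theorem IsCRepair.isContingency_erase (hM : IsCRepair D Q M) (ht' : t' ∈ D \ M) :
    IsContingency D D Q t' ((D \ M).erase t') := by
  have hall : (D \ M).erase t' ∪ {t'} = D \ M := by
    rw [Finset.union_singleton, Finset.insert_erase ht']
  refine ⟨(Finset.erase_subset _ _).trans Finset.sdiff_subset, Finset.notMem_erase _ _, ?_, ?_⟩
  · rw [Finset.sdiff_erase (Finset.mem_sdiff.1 ht').1, Finset.sdiff_sdiff_eq_self hM.1]
    exact hM.query_insert ht'
  · rw [hall, Finset.sdiff_sdiff_eq_self hM.1]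
    exact hM.2.1

theorem IsCRepair.card_add_minContingency_lt (hM : IsCRepair D Q M) (ht' : t' ∈ D \ M) :
    M.card + minContingency D D Q t' < D.card := by
  have hle := minContingency_le_card (hM.isContingency_erase ht')
  rw [Finset.card_erase_of_mem ht'] at hle
  have hpos := Finset.card_pos.2 ⟨t', ht'⟩
  have := Finset.card_sdiff_add_card_eq_card hM.1
  omega

end

/-- Corollary 3(b): every most responsible actual cause is excluded from
some C-repair. -/
theorem mrc_excluded_from_some_crepair (D : Finset α) (Q : Finset α → Prop)
    (hmono : MonotoneQuery Q) (t : α) (hc : IsMostResponsibleCause D D Q t) :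
    ∃ D' : Finset α, IsCRepair D Q D' ∧ t ∉ D' := by
  obtain ⟨hcause, hmost⟩ := hc
  obtain ⟨Γ, hΓ, hΓcard⟩ := hcause.exists_contingency_card_eq
  have hEcard := hΓ.card_sdiff_union_singleton_add subset_rfl hcause.1
  obtain ⟨M, hM⟩ := exists_isCRepair_s10 Finset.sdiff_subset hΓ.2.2.2
  obtain ⟨t', ht'⟩ : (D \ M).Nonempty := Finset.sdiff_nonempty.2 fun hDM =>
    hM.2.1 (hmono (Finset.sdiff_subset.trans hDM) hΓ.2.2.1)
  have hle := minContingency_le_of_resp_le hcause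
    ⟨(Finset.mem_sdiff.1 ht').1, _, hM.isContingency_erase ht'⟩ (not_lt.1 (hmost t'))
  have hlt := hM.card_add_minContingency_lt ht'
  exact ⟨_, hM.of_card_le_s10 Finset.sdiff_subset hΓ.2.2.2 (by omega), by simp⟩
end

section
/- Let D be a database instance in which all tuples are endogenous and Q a monotone Boolean query with ¬Q ∅ (the empty instance satisfies the denial constraint). For every finite set T of tuples (the ground atoms of a projection-free conjunctive query answer): T is contained in every S-repair of D with respect to ¬Q if and only if T ⊆ D and no element of T is an actual cause for Q. (Proposition 'cqa' (a)) -/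
open scoped Classical

variable {α : Type*} [DecidableEq α]

theorem exists_sRepair_superset {α : Type*} {D E : Finset α} {Q : Finset α → Prop} (hED : E ⊆ D)
    (hE : ¬ Q E) : ∃ R, IsSRepair D Q R ∧ E ⊆ R := by
  have hfin : {F : Finset α | F ⊆ D ∧ ¬ Q F}.Finite :=
    D.powerset.finite_toSet.subset fun F hF => Finset.mem_powerset.2 hF.1
  obtain ⟨R, hER, ⟨hRD, hR⟩, hmax⟩ := hfin.exists_le_maximal ⟨hED, hE⟩
  exact ⟨R, ⟨hRD, hR, fun F hFD hF hRF => (hmax ⟨hFD, hF⟩ hRF).antisymm hRF⟩, hER⟩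

namespace IsSRepair

variable {D R : Finset α} {Q : Finset α → Prop} {t : α}

theorem query_insert_s12 (hR : IsSRepair D Q R) (htD : t ∈ D) (htR : t ∉ R) :
    Q (insert t R) := by
  by_contra hQ
  exact htR (hR.2.2 _ (Finset.insert_subset htD hR.1) hQ (Finset.subset_insert t R) ▸
    Finset.mem_insert_self t R)

/-- The tuples of `D` outside an S-repair `R` are actual causes, with contingency set
`D \ insert t R`. -/
theorem isActualCause_of_notMem (hR : IsSRepair D Q R) (htD : t ∈ D) (htR : t ∉ R) :
    IsActualCause D D Q t := by
  have hdel : D \ (D \ insert t R) = insert t R :=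
    Finset.sdiff_sdiff_eq_self (Finset.insert_subset htD hR.1)
  have hdel_t : D \ (D \ insert t R ∪ {t}) = R := by
    ext x
    have := @hR.1 x
    simp only [Finset.mem_sdiff, Finset.mem_union, Finset.mem_insert, Finset.mem_singleton]
    by_cases hx : x = t
    · simp_all
    · tauto
  refine ⟨htD, D \ insert t R, Finset.sdiff_subset, by simp, ?_, ?_⟩
  · rw [hdel]
    exact hR.query_insert_s12 htD htR
  · rw [hdel_t]
    exact hR.2.1

end IsSRepair

theorem IsActualCause.exists_sRepair_notMem {D Dn : Finset α} {Q : Finset α → Prop} {t : α}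
    (hmono : MonotoneQuery Q) (ht : IsActualCause D Dn Q t) :
    ∃ R, IsSRepair D Q R ∧ t ∉ R := by
  obtain ⟨-, Γ, -, -, hQ, hQt⟩ := ht
  obtain ⟨R, hR, hsub⟩ := exists_sRepair_superset Finset.sdiff_subset hQt
  refine ⟨R, hR, fun htR => hR.2.1 (hmono ?_ hQ)⟩
  -- `D \ Γ` is `D \ (Γ ∪ {t})` with `t` put back, and both parts lie in `R`.
  intro x hx
  by_cases hxt : x = t
  · exact hxt ▸ htR
  · exact hsub (by simp_all)

/-- Proposition `cqa`(a): `T` is contained in every S-repair iff `T ⊆ D` and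
no element of `T` is an actual cause for `Q`. -/
theorem sconsistent_iff_no_cause (D : Finset α) (Q : Finset α → Prop)
    (hmono : MonotoneQuery Q) (hQempty : ¬ Q ∅) (T : Finset α) :
    (∀ D' : Finset α, IsSRepair D Q D' → T ⊆ D') ↔
      (T ⊆ D ∧ ∀ t ∈ T, ¬ IsActualCause D D Q t) := by
  constructor
  · intro hT
    obtain ⟨R, hR, -⟩ := exists_sRepair_superset (Finset.empty_subset D) hQempty
    refine ⟨(hT R hR).trans hR.1, fun t ht hcause => ?_⟩
    obtain ⟨R', hR', htR'⟩ := hcause.exists_sRepair_notMem hmono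
    exact htR' (hT R' hR' ht)
  · rintro ⟨hTD, hT⟩ R hR t ht
    by_contra htR
    exact hT t ht (hR.isActualCause_of_notMem (hTD ht) htR)
end

section
/- Let D = Dⁿ ∪ Dˣ be a database instance, Q a monotone Boolean query, and ℳ the associated diagnosis problem. A tuple t ∈ Dⁿ is an actual cause for Q if and only if 𝒟(ℳ,t) ≠ ∅, i.e., there exists a minimal diagnosis containing t. (Proposition 9) -/
open scoped Classical

variable {α : Type*} [DecidableEq α]

/-
A contingency set `Γ` for `t` makes `Γ ∪ {t}` a diagnosis, and every minimal diagnosis inside it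
must contain `t`, since removing `Γ` alone keeps `Q` true and `Q` is monotone. Conversely, if `Δ` is
a minimal diagnosis containing `t`, then `Δ.erase t` is not a diagnosis, so it is a contingency set
for `t`.
-/

section Diagnosis

variable {D Dn : Finset α} {Q : Finset α → Prop} {t : α} {Γ Δ : Finset α}

theorem isMinimalDiagnosisWith_iff :
    IsMinimalDiagnosisWith D Dn Q t Δ ↔ Minimal (IsDiagnosis D Dn Q) Δ ∧ t ∈ Δ := by
  rw [minimal_iff_forall_lt, IsMinimalDiagnosisWith]
  tauto

theorem IsContingency.isDiagnosis_union_singleton (hΓ : IsContingency D Dn Q t Γ)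
    (ht : t ∈ Dn) : IsDiagnosis D Dn Q (Γ ∪ {t}) :=
  ⟨Finset.union_subset hΓ.1 (Finset.singleton_subset_iff.2 ht), hΓ.2.2.2⟩

theorem IsDiagnosis.mem_of_subset_union_singleton (hmono : MonotoneQuery Q)
    (hΓ : Q (D \ Γ)) (hΔ : IsDiagnosis D Dn Q Δ) (hsub : Δ ⊆ Γ ∪ {t}) : t ∈ Δ := by
  by_contra htΔ
  have hΔΓ : Δ ⊆ Γ := fun x hx ↦
    (Finset.mem_union.1 (hsub hx)).resolve_right fun hxt ↦
      htΔ (Finset.mem_singleton.1 hxt ▸ hx)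
  exact hΔ.2 (hmono (Finset.sdiff_subset_sdiff subset_rfl hΔΓ) hΓ)

theorem IsMinimalDiagnosisWith.isContingency_erase
    (hΔ : IsMinimalDiagnosisWith D Dn Q t Δ) : IsContingency D Dn Q t (Δ.erase t) := by
  obtain ⟨⟨hΔDn, hnQ⟩, htΔ, hmin⟩ := hΔ
  have hsub : Δ.erase t ⊆ Dn := (Finset.erase_subset t Δ).trans hΔDn
  refine ⟨hsub, Finset.notMem_erase t Δ, ?_, ?_⟩
  · by_contra hQ
    exact hmin _ (Finset.erase_ssubset htΔ) ⟨hsub, hQ⟩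
  · rwa [Finset.union_singleton, Finset.insert_erase htΔ]

end Diagnosis

theorem cause_iff_minimal_diagnosis_general (D Dn : Finset α) (Q : Finset α → Prop)
    (hmono : MonotoneQuery Q) (t : α) :
    IsActualCause D Dn Q t ↔ ∃ Δ : Finset α, IsMinimalDiagnosisWith D Dn Q t Δ := by
  constructor
  · rintro ⟨ht, Γ, hΓ⟩
    obtain ⟨Δ, hsub, hΔ⟩ :=
      exists_minimal_le_of_wellFoundedLT _ _ (hΓ.isDiagnosis_union_singleton ht)
    have htΔ := hΔ.prop.mem_of_subset_union_singleton hmono hΓ.2.2.1 hsub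
    exact ⟨Δ, isMinimalDiagnosisWith_iff.2 ⟨hΔ, htΔ⟩⟩
  · rintro ⟨Δ, hΔ⟩
    exact ⟨hΔ.1.1 hΔ.2.1, Δ.erase t, hΔ.isContingency_erase⟩

/-- Proposition 9: `t ∈ Dⁿ` is an actual cause for `Q` iff `𝒟(ℳ,t) ≠ ∅`. -/
theorem cause_iff_minimal_diagnosis (D Dn Dx : Finset α) (Q : Finset α → Prop)
    (hpart : D = Dn ∪ Dx) (hdisj : Disjoint Dn Dx) (hmono : MonotoneQuery Q)
    (t : α) (ht : t ∈ Dn) :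
    IsActualCause D Dn Q t ↔ ∃ Δ : Finset α, IsMinimalDiagnosisWith D Dn Q t Δ :=
  cause_iff_minimal_diagnosis_general D Dn Q hmono t
end

section
/- Let D be a database instance in which all tuples are endogenous and Q a monotone Boolean query with ¬Q ∅ (the empty instance satisfies the denial constraints). Then D is consistent (¬Q D holds) if and only if there is no actual cause for Q in D, i.e., CS(D, ∅, Q) = ∅. (Claim proved in Section 4) -/
/-!
A cause forces `Q D` by monotonicity, since `Q (D \ Γ)` holds for its contingency set `Γ`.
Conversely, if `Q D` holds, take an inclusion-minimal `s ⊆ D` with `Q s`; it is nonempty because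
`¬ Q ∅`, and every `t ∈ s` is a cause with contingency set `D \ s`, because removing `t` from `s`
falsifies `Q` by minimality.
-/

open scoped Classical

variable {α : Type*} [DecidableEq α]

section

variable {α : Type*} {D s : Finset α} {Q : Finset α → Prop}

theorem exists_mem_Sfam (hD : Q D) : ∃ s, s ∈ Sfam D Q := by
  obtain ⟨s, hsD, hmin⟩ := exists_minimal_le_of_wellFoundedLT Q D hD
  exact ⟨s, hsD, hmin.prop, fun _ hlt => hmin.not_prop_of_lt hlt⟩

theorem nonempty_of_mem_Sfam (hQempty : ¬ Q ∅) (hs : s ∈ Sfam D Q) : s.Nonempty :=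
  Finset.nonempty_iff_ne_empty.2 fun hempty => hQempty (hempty ▸ hs.2.1)

end

variable {D Dn Γ s : Finset α} {Q : Finset α → Prop} {t : α}

theorem IsContingency.query_of_monotone (hmono : MonotoneQuery Q)
    (h : IsContingency D Dn Q t Γ) : Q D :=
  hmono Finset.sdiff_subset h.2.2.1

theorem isContingency_sdiff_of_mem_Sfam (hs : s ∈ Sfam D Q) (ht : t ∈ s) :
    IsContingency D D Q t (D \ s) := by
  obtain ⟨hsD, hQs, hmin⟩ := hs
  have hremove : D \ (D \ s ∪ {t}) = s.erase t := by
    ext x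
    have := @hsD x
    simp only [Finset.mem_sdiff, Finset.mem_union, Finset.mem_singleton, Finset.mem_erase]
    tauto
  refine ⟨Finset.sdiff_subset, fun h => (Finset.mem_sdiff.1 h).2 ht, ?_, ?_⟩
  · rwa [Finset.sdiff_sdiff_eq_self hsD]
  · rw [hremove]
    exact hmin _ (Finset.erase_ssubset ht)

theorem isActualCause_of_mem_Sfam (hs : s ∈ Sfam D Q) (ht : t ∈ s) : IsActualCause D D Q t :=
  ⟨hs.1 ht, D \ s, isContingency_sdiff_of_mem_Sfam hs ht⟩

/-- Section 4 claim: `D` is consistent wrt the denial constraints iff there is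
no actual cause for `Q` in `D` (all tuples endogenous). -/
theorem consistent_iff_no_causes (D : Finset α) (Q : Finset α → Prop)
    (hmono : MonotoneQuery Q) (hQempty : ¬ Q ∅) :
    ¬ Q D ↔ ∀ t : α, ¬ IsActualCause D D Q t := by
  constructor
  · rintro hD t ⟨-, Γ, hΓ⟩
    exact hD (hΓ.query_of_monotone hmono)
  · intro hnone hD
    obtain ⟨s, hs⟩ := exists_mem_Sfam hD
    obtain ⟨t, ht⟩ := nonempty_of_mem_Sfam hQempty hs
    exact hnone t (isActualCause_of_mem_Sfam hs ht)
end
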